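/- The elements γ_0 = y_0 − x_0 u_0, …, γ_n = y_n − x_n u_n form a regular sequence in R; equivalently, the Koszul complex F on γ_0,…,γ_n over R satisfies H_t(F) = 0 for all t > 0. -/

import Mathlib

/-!
# Statement 7 (part of Theorem `resdiag`)

Let `S = k[x₀,…,xₙ]` be positively `A`-graded with `deg xᵢ = dᵢ`, let `Q ⊆ A`
be the submonoid generated by the `dᵢ` (the effective semigroup), let
`S' = k[x₀,…,xₙ,y₀,…,yₙ]` and let `R = S'[Q]` be the semigroup algebra, with
`uᵢ = u^{dᵢ}`.  Then the elements `γᵢ = yᵢ - xᵢuᵢ` form a regular sequence in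
`R` (equivalently, the Koszul complex on `γ₀,…,γₙ` over `R` is acyclic in
positive degrees).
-/

noncomputable section

variable (k : Type) [Field k] (A : Type) [AddCommGroup A] [DecidableEq A]
  (n : ℕ) (d : Fin (n + 1) → A)

/-- `S = k[x₀,…,xₙ]` with `deg xᵢ = dᵢ` is positively `A`-graded. -/
def PositivelyGradedPoly : Prop :=
  ∃ θ : A →+ ℤ, ∀ q ∈ AddSubmonoid.closure (Set.range d), 0 ≤ θ q ∧ (θ q = 0 → q = 0)

/-- The effective semigroup `Q ⊆ A`, generated by `d₀,…,dₙ`. -/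
def effQ : AddSubmonoid A := AddSubmonoid.closure (Set.range d)

/-- `S' = k[x₀,…,xₙ,y₀,…,yₙ]`: the Cox ring of the product.  The first copy
of `Fin (n+1)` indexes the `x`-variables, the second the `y`-variables. -/
abbrev Sprime := MvPolynomial (Fin (n + 1) ⊕ Fin (n + 1)) k

/-- `R = S'[Q]`, the semigroup algebra of `Q` over `S'`; the basis element
`u^q` (`q ∈ Q`) is homogeneous of degree `(-q, q)`. -/
abbrev Rring := AddMonoidAlgebra (Sprime k n) ↥(effQ A n d)

/-- `uᵢ = u^{dᵢ} ∈ R`. -/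
def uElt (i : Fin (n + 1)) : Rring k A n d :=
  AddMonoidAlgebra.single
    ⟨d i, AddSubmonoid.subset_closure (Set.mem_range_self i)⟩ 1

/-- `γᵢ = yᵢ - xᵢuᵢ ∈ R`, homogeneous of degree `(0, dᵢ)`. -/
def gamma (i : Fin (n + 1)) : Rring k A n d :=
  AddMonoidAlgebra.single 0 (MvPolynomial.X (Sum.inr i)) -
    AddMonoidAlgebra.single
      ⟨d i, AddSubmonoid.subset_closure (Set.mem_range_self i)⟩
      (MvPolynomial.X (Sum.inl i))

/-! Over `B = k[x][Q]` the ring `R` is the polynomial ring `B[y₀,…,yₙ]`, and in it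
`γᵢ = yᵢ - bᵢ` with constants `bᵢ = xᵢuᵢ ∈ B`. Such shifted variables form a regular
sequence over any nonzero ring: `y₀ - b₀` is monic, and the quotient by it evaluates `y₀`
at `b₀`, which leaves the polynomial ring in the remaining variables. -/

open RingTheory.Sequence
open scoped Pointwise

theorem RingEquiv.isRegular_congr {R S : Type*} [CommRing R] [CommRing S] (e : R ≃+* S)
    (rs : List R) : IsRegular R rs ↔ IsRegular S (rs.map e) :=
  have := RingHomInvPair.of_ringEquiv e
  have := RingHomInvPair.of_ringEquiv_symm e
  e.toSemilinearEquiv.isRegular_congr' rs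

theorem Submodule.smul_top_eq_span_singleton {R : Type*} [CommSemiring R] (r : R) :
    (r • ⊤ : Submodule R R) = Ideal.span {r} := by
  rw [← Submodule.ideal_span_singleton_smul, smul_eq_mul, Ideal.mul_top]

namespace Polynomial

theorem isRegular_X_sub_C_cons {D : Type*} [CommRing D] (c : D) {rs : List D}
    (hrs : IsRegular D rs) : IsRegular D[X] ((X - C c) :: rs.map C) := by
  rw [isRegular_cons_iff]
  refine ⟨fun p q h => (monic_X_sub_C c).isRegular.left <| by simpa only [smul_eq_mul] using h,
    ?_⟩
  let e : QuotSMulTop (X - C c) D[X] ≃+* D :=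
    (Ideal.quotEquivOfEq (Submodule.smul_top_eq_span_singleton _)).trans
      (quotientSpanXSubCAlgEquiv c).toRingEquiv
  have he (p : D[X]) : e (Submodule.Quotient.mk p) = p.eval c := by
    show quotientSpanXSubCAlgEquiv c (Ideal.quotEquivOfEq
      (Submodule.smul_top_eq_span_singleton (X - C c)) (Ideal.Quotient.mk _ p)) = _
    rw [Ideal.quotEquivOfEq_mk, quotientSpanXSubCAlgEquiv_mk]
  refine (AddEquiv.isRegular_congr (e := e.toAddEquiv) ?_).mpr hrs
  refine List.forall₂_map_left_iff.mpr (List.forall₂_same.mpr fun a _ x => ?_)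
  obtain ⟨p, rfl⟩ := Submodule.Quotient.mk_surjective _ x
  show e (Submodule.Quotient.mk (C a * p)) = a * e (Submodule.Quotient.mk p)
  rw [he, he, eval_mul, eval_C]

end Polynomial

namespace MvPolynomial

theorem isRegular_X_sub_C {D : Type*} [CommRing D] [Nontrivial D] (m : ℕ) (b : Fin m → D) :
    IsRegular (MvPolynomial (Fin m) D) (List.ofFn fun i => X i - C (b i)) := by
  induction m with
  | zero => simpa using IsRegular.nil (MvPolynomial (Fin 0) D) (MvPolynomial (Fin 0) D)
  | succ m ih =>
    have hC (a : D) : finSuccEquiv D m (C a) = Polynomial.C (C a) :=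
      (finSuccEquiv D m).commutes a
    rw [(finSuccEquiv D m).toRingEquiv.isRegular_congr, List.map_ofFn, List.ofFn_succ]
    simpa [Function.comp_def, hC, finSuccEquiv_X_zero, finSuccEquiv_X_succ, List.map_ofFn]
      using Polynomial.isRegular_X_sub_C_cons (C (b 0)) (ih (b ∘ Fin.succ))

end MvPolynomial

namespace AddMonoidAlgebra

open MvPolynomial

def mvPolynomialSumRingEquiv (K σ τ Q : Type*) [CommSemiring K] [AddCommMonoid Q] :
    AddMonoidAlgebra (MvPolynomial (σ ⊕ τ) K) Q ≃+*
      MvPolynomial τ (AddMonoidAlgebra (MvPolynomial σ K) Q) :=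
  (mapRingEquiv Q ((renameEquiv K (Equiv.sumComm σ τ)).toRingEquiv.trans
    (sumRingEquiv K τ σ))).trans commRingEquiv

variable {K σ τ Q : Type*} [CommSemiring K] [AddCommMonoid Q]

theorem mvPolynomialSumRingEquiv_single_X_inl (q : Q) (i : σ) :
    mvPolynomialSumRingEquiv K σ τ Q (single q (X (Sum.inl i))) = C (single q (X i)) := by
  simp only [mvPolynomialSumRingEquiv, RingEquiv.trans_apply, mapRingEquiv_single,
    RingEquiv.coe_mk, AlgEquiv.toEquiv_eq_coe, EquivLike.coe_coe, renameEquiv_apply,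
    Equiv.sumComm_apply, rename_X, Sum.swap_inl, sumRingEquiv_X_inr, C_apply,
    ← single_eq_monomial, commRingEquiv_single_single]

theorem mvPolynomialSumRingEquiv_single_zero_X_inr (j : τ) :
    mvPolynomialSumRingEquiv K σ τ Q (single 0 (X (Sum.inr j))) = X j := by
  simp only [mvPolynomialSumRingEquiv, RingEquiv.trans_apply, mapRingEquiv_single,
    RingEquiv.coe_mk, AlgEquiv.toEquiv_eq_coe, EquivLike.coe_coe, renameEquiv_apply,
    Equiv.sumComm_apply, rename_X, Sum.swap_inr, sumRingEquiv_X_inl]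
  simp only [X, ← single_eq_monomial, commRingEquiv_single_zero_single]

end AddMonoidAlgebra

set_option synthInstance.maxHeartbeats 1000000 in
theorem statement7 :
    RingTheory.Sequence.IsRegular (Rring k A n d)
      (List.ofFn fun i => gamma k A n d i) := by
  let B := AddMonoidAlgebra (MvPolynomial (Fin (n + 1)) k) (effQ A n d)
  let e := AddMonoidAlgebra.mvPolynomialSumRingEquiv k (Fin (n + 1)) (Fin (n + 1)) (effQ A n d)
  let b (i : Fin (n + 1)) : B :=
    .single ⟨d i, AddSubmonoid.subset_closure (Set.mem_range_self i)⟩ (MvPolynomial.X i)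
  have he (i : Fin (n + 1)) : e (gamma k A n d i) = MvPolynomial.X i - MvPolynomial.C (b i) := by
    rw [gamma, map_sub, AddMonoidAlgebra.mvPolynomialSumRingEquiv_single_zero_X_inr,
      AddMonoidAlgebra.mvPolynomialSumRingEquiv_single_X_inl]
  rw [RingEquiv.isRegular_congr (S := MvPolynomial (Fin (n + 1)) B) e, List.map_ofFn]
  simpa only [Function.comp_def, he] using MvPolynomial.isRegular_X_sub_C (n + 1) b
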